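/- Let q ≥ 3 be an odd integer and n ≥ 7 an odd integer. Then the period of any orientable sequence of order n over ℤ_q is at most (q^n − q^{(n+1)/2} − 2q^{(n-1)/2} + q + q^2)/2. -/

import Mathlib

namespace OSeq

variable {q : ℕ}

/-- The `n`-tuple (window) of the sequence `s` at position `i`. -/
def window (s : ℤ → ZMod q) (n : ℕ) (i : ℤ) : Fin n → ZMod q :=
  fun k => s (i + (k : ℕ))

/-- The reverse of an `n`-tuple. -/
def tupRev {n : ℕ} (u : Fin n → ZMod q) : Fin n → ZMod q :=
  fun k => u k.rev

/-- `m` is the (least) period of the periodic sequence `s`. -/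
def IsPeriod (s : ℤ → ZMod q) (m : ℕ) : Prop :=
  0 < m ∧ (∀ i : ℤ, s (i + (m : ℤ)) = s i) ∧
    ∀ m' : ℕ, 0 < m' → (∀ i : ℤ, s (i + (m' : ℤ)) = s i) → m ≤ m'

/-- `s` is an `n`-window sequence of period `m`. -/
def IsNWindowSeq (s : ℤ → ZMod q) (n m : ℕ) : Prop :=
  IsPeriod s m ∧ ∀ i j : ℤ, window s n i = window s n j → i ≡ j [ZMOD (m : ℤ)]

/-- `s` is an orientable sequence of order `n` and period `m`. -/
def IsOS (s : ℤ → ZMod q) (n m : ℕ) : Prop :=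
  IsNWindowSeq s n m ∧ ∀ i j : ℤ, window s n i ≠ tupRev (window s n j)

/-- `s` is a negative orientable sequence of order `n` and period `m`. -/
def IsNOS (s : ℤ → ZMod q) (n m : ℕ) : Prop :=
  IsNWindowSeq s n m ∧ ∀ i j : ℤ, window s n i ≠ - tupRev (window s n j)

/-- `s` is a special orientable sequence of order `n` and period `m`:
orientable and also negative orientable. -/
def IsSpecialOS (s : ℤ → ZMod q) (n m : ℕ) : Prop :=
  IsOS s n m ∧ ∀ i j : ℤ, window s n i ≠ - tupRev (window s n j)

/-- The weight modulo `q` of one period of `s`. -/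
def wq (s : ℤ → ZMod q) (m : ℕ) : ZMod q :=
  ∑ i ∈ Finset.range m, s (i : ℤ)

/-- The alternating sign weight modulo `q` of one period of `s`. -/
def wqA (s : ℤ → ZMod q) (m : ℕ) : ZMod q :=
  ∑ i ∈ Finset.range m, (-1 : ZMod q) ^ (m - 1 - i) * s (i : ℤ)

/-- The Lempel homomorphism `D` on sequences. -/
def D (t : ℤ → ZMod q) : ℤ → ZMod q := fun j => t (j + 1) - t j

/-- The homomorphism `A` on sequences. -/
def A (t : ℤ → ZMod q) : ℤ → ZMod q := fun j => t (j + 1) + t j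

/-- Shift of a sequence by `c`. -/
def shift (t : ℤ → ZMod q) (c : ℤ) : ℤ → ZMod q := fun i => t (i + c)

/-- `t'` is a translate of `t`. -/
def IsTranslate (t t' : ℤ → ZMod q) : Prop := ∃ c : ZMod q, ∀ i : ℤ, t' i = t i + c

/-- `t'` is an alternating sign translate of `t`. -/
def IsAltTranslate (t t' : ℤ → ZMod q) : Prop :=
  ∃ c : ZMod q, ∀ i : ℤ, t' i = t i + (if i % 2 = 0 then c else -c)

/-- Two sequences are (`n`-window) disjoint. -/
def WindowDisjoint (n : ℕ) (s t : ℤ → ZMod q) : Prop :=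
  ∀ i j : ℤ, window s n i ≠ window t n j

/-- Orientable-disjoint. -/
def ODisjoint (n : ℕ) (s t : ℤ → ZMod q) : Prop :=
  WindowDisjoint n s t ∧ ∀ i j : ℤ, window s n i ≠ tupRev (window t n j)

/-- Negative orientable-disjoint (no-disjoint). -/
def NODisjoint (n : ℕ) (s t : ℤ → ZMod q) : Prop :=
  WindowDisjoint n s t ∧ ∀ i j : ℤ, window s n i ≠ - tupRev (window t n j)

/-- Special-orientable-disjoint. -/
def SpecialODisjoint (n : ℕ) (s t : ℤ → ZMod q) : Prop :=
  ODisjoint n s t ∧ ∀ i j : ℤ, window s n i ≠ - tupRev (window t n j)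

/-- The string `a^t` appears in `s`. -/
def HasString (s : ℤ → ZMod q) (a : ZMod q) (t : ℕ) : Prop :=
  ∃ j : ℤ, ∀ k : ℕ, k < t → s (j + (k : ℤ)) = a

/-- There is a run `a^t` of `a` in `s` starting at position `j`. -/
def IsRunAt (s : ℤ → ZMod q) (a : ZMod q) (j : ℤ) (t : ℕ) : Prop :=
  (∀ k : ℕ, k < t → s (j + (k : ℤ)) = a) ∧ s (j - 1) ≠ a ∧ s (j + (t : ℤ)) ≠ a

/-- `a^t` is a maximal run of `a` in `s`: the string `a^t` appears and every
string `a^{t'}` appearing in `s` has `t' ≤ t`. -/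
def IsMaxRun (s : ℤ → ZMod q) (a : ZMod q) (t : ℕ) : Prop :=
  HasString s a t ∧ ∀ t' : ℕ, HasString s a t' → t' ≤ t

/-- `k`-th entry of the alternating string `a, -a, a, -a, ...`. -/
def altVal (a : ZMod q) (k : ℕ) : ZMod q := if k % 2 = 0 then a else -a

/-- The signed string `ạ^t` (alternating `a, -a, ...`) appears in `s`. -/
def HasSignedString (s : ℤ → ZMod q) (a : ZMod q) (t : ℕ) : Prop :=
  ∃ j : ℤ, ∀ k : ℕ, k < t → s (j + (k : ℤ)) = altVal a k

/-- There is a signed run `ạ^t` of `a` in `s` starting at position `j`. -/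
def IsSignedRunAt (s : ℤ → ZMod q) (a : ZMod q) (j : ℤ) (t : ℕ) : Prop :=
  (∀ k : ℕ, k < t → s (j + (k : ℤ)) = altVal a k) ∧
    s (j - 1) ≠ -a ∧ s (j + (t : ℤ)) ≠ altVal a t

/-- `ạ^t` is a maximal signed run of `a` in `s`. -/
def IsMaxSignedRun (s : ℤ → ZMod q) (a : ZMod q) (t : ℕ) : Prop :=
  HasSignedString s a t ∧ ∀ t' : ℕ, HasSignedString s a t' → t' ≤ t

/-- The sequence obtained from the ring sequence `[s_0,...,s_{m-1}]` of `s` by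
inserting one extra symbol `a` at ring position `r`, i.e. with ring sequence
`[s_0,...,s_{r-1}, a, s_r, ..., s_{m-1}]` of length `m+1`. -/
def insert1 (s : ℤ → ZMod q) (m r : ℕ) (a : ZMod q) : ℤ → ZMod q :=
  fun j =>
    let j' := (j % ((m : ℤ) + 1)).toNat
    if j' < r then s (j' : ℤ) else if j' = r then a else s ((j' : ℤ) - 1)

/-- The sequence obtained from the ring sequence `[s_0,...,s_{m-1}]` of `s` by
inserting the two symbols `a, -a` at ring position `r`, i.e. with ring sequence
`[s_0,...,s_{r-1}, a, -a, s_r, ..., s_{m-1}]` of length `m+2`. -/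
def insert2 (s : ℤ → ZMod q) (m r : ℕ) (a : ZMod q) : ℤ → ZMod q :=
  fun j =>
    let j' := (j % ((m : ℤ) + 2)).toNat
    if j' < r then s (j' : ℤ)
    else if j' = r then a
    else if j' = r + 1 then -a
    else s ((j' : ℤ) - 2)

/-- The operation `E_a` (with the convention `E_0(S) = S`). -/
def Emod (s : ℤ → ZMod q) (m r : ℕ) (a : ZMod q) : ℤ → ZMod q :=
  if a = 0 then s else insert1 s m r a

/-- A sequence is good (for order `n`) if every run of `0` has length at most `n-2`. -/
def GoodSeq (s : ℤ → ZMod q) (n : ℕ) : Prop :=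
  ∀ t : ℕ, HasString s 0 t → t ≤ n - 2

/-- A tuple is uniform if it is constant. -/
def Uniform {n : ℕ} (u : Fin n → ZMod q) : Prop := ∃ c : ZMod q, ∀ i, u i = c

/-- A tuple is symmetric if it equals its own reverse. -/
def Symm {n : ℕ} (u : Fin n → ZMod q) : Prop := ∀ i : Fin n, u i = u i.rev

/-- An `n`-tuple is `m`-symmetric (`m ≤ n`) if `u_i = u_{m-1-i}` for `0 ≤ i ≤ m-1`. -/
def MSymm {n : ℕ} (u : Fin n → ZMod q) (m : ℕ) (hm : m ≤ n) : Prop :=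
  ∀ i : Fin m, u (Fin.castLE hm i) = u (Fin.castLE hm i.rev)

/-- An `n`-tuple (`n ≥ 2`) is alternating. -/
def Alternating {n : ℕ} (hn : 2 ≤ n) (u : Fin n → ZMod q) : Prop :=
  u ⟨0, by omega⟩ ≠ u ⟨1, by omega⟩ ∧
    ∀ i : Fin n, u i = if (i : ℕ) % 2 = 0 then u ⟨0, by omega⟩ else u ⟨1, by omega⟩

/-- `L_n(v)`: the set of `n`-tuples whose first `n-r` entries agree with the
`(n-r)`-tuple `v`. -/
def Lset (n r : ℕ) (v : Fin (n - r) → ZMod q) : Set (Fin n → ZMod q) :=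
  {u | ∀ i : Fin (n - r), u (Fin.castLE (Nat.sub_le n r) i) = v i}

/-- The `n`-tuple `u` appears in the sequence `s`. -/
def AppearsIn (s : ℤ → ZMod q) (n : ℕ) (u : Fin n → ZMod q) : Prop :=
  ∃ i : ℤ, window s n i = u

end OSeq

open OSeq

/-!
Split the `q ^ n` tuples into the `2 m` windows and reversed windows of `S` and the set `N` of
the remaining ones. Every palindrome lies in `N`, which gives `q ^ ((n + 1) / 2)` elements.
For a palindrome `v` of length `n - 1`, the extensions `v a` that are windows and those that
are reversed windows are matched with each other through the occurrences of `b v a` in `S`;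
since there are `q` extensions and `q` is odd, one of them lies in `N`. This gives
`q ^ ((n - 1) / 2)` elements of `N` with palindromic prefix and, by reversal, as many with
palindromic suffix. For odd `n` a tuple with two of these three properties is constant, so the
overlaps cost at most `2 q`.
-/

namespace OSeq

open Finset

open scoped Classical

variable {q : ℕ}

section Tuples

variable {n k : ℕ}

theorem tupRev_tupRev (u : Fin n → ZMod q) : tupRev (tupRev u) = u :=
  funext fun i => by simp [tupRev]

theorem tupRev_injective : Function.Injective (tupRev : (Fin n → ZMod q) → Fin n → ZMod q) :=
  Function.LeftInverse.injective tupRev_tupRev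

theorem symm_iff_tupRev_eq {u : Fin n → ZMod q} : Symm u ↔ tupRev u = u := by
  simp only [Symm, tupRev, funext_iff, eq_comm]

theorem symm_tupRev {u : Fin n → ZMod q} : Symm (tupRev u) ↔ Symm u := by
  simp only [symm_iff_tupRev_eq, tupRev_tupRev, eq_comm]

theorem Symm.apply_eq {u : Fin n → ZMod q} (hu : Symm u) {i j : Fin n}
    (hij : (i : ℕ) + j + 1 = n) : u i = u j := by
  rw [hu i]
  congr 1
  ext
  simp only [Fin.val_rev]
  omega

theorem tupRev_snoc (v : Fin k → ZMod q) (a : ZMod q) :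
    tupRev (Fin.snoc v a : Fin (k + 1) → ZMod q) = Fin.cons a (tupRev v) :=
  funext (Fin.snoc_rev a v)

theorem tail_tupRev (u : Fin (k + 1) → ZMod q) : Fin.tail (tupRev u) = tupRev (Fin.init u) :=
  funext fun i => by simp [Fin.tail, Fin.init, tupRev, Fin.rev_succ]

theorem Uniform.symm {u : Fin n → ZMod q} (hu : Uniform u) : Symm u := by
  obtain ⟨c, hc⟩ := hu
  exact fun i => (hc i).trans (hc i.rev).symm

theorem card_uniform_le [NeZero q] : #{u : Fin n → ZMod q | Uniform u} ≤ q :=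
  calc #{u : Fin n → ZMod q | Uniform u}
      ≤ #(univ.image fun (c : ZMod q) (_ : Fin n) => c) :=
        card_le_card fun u hu => by
          obtain ⟨c, hc⟩ := (mem_filter.mp hu).2
          exact mem_image.mpr ⟨c, mem_univ c, funext fun i => (hc i).symm⟩
    _ ≤ #(univ : Finset (ZMod q)) := card_image_le
    _ = q := by rw [card_univ, ZMod.card]

theorem uniform_of_castSucc_eq_succ {u : Fin (k + 1) → ZMod q}
    (h : ∀ i : Fin k, u i.castSucc = u i.succ) : Uniform u := by
  refine ⟨u 0, fun i => ?_⟩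
  induction i using Fin.induction with
  | zero => rfl
  | succ i ih => rw [← h, ih]

theorem uniform_of_symm_of_symm_init {u : Fin (k + 1) → ZMod q} (hu : Symm u)
    (hinit : Symm (Fin.init u)) : Uniform u :=
  uniform_of_castSucc_eq_succ fun i => by
    rw [hu i.succ, Fin.rev_succ]
    exact hinit i

theorem uniform_of_symm_init_of_symm_tail {h : ℕ} {u : Fin (2 * h + 1) → ZMod q}
    (hinit : Symm (Fin.init u)) (htail : Symm (Fin.tail u)) : Uniform u := by
  have hl : ∀ i j (hi : i < 2 * h) (hj : j < 2 * h), i + j + 1 = 2 * h →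
      u ⟨i, by omega⟩ = u ⟨j, by omega⟩ := fun i j hi hj hij =>
    hinit.apply_eq (i := ⟨i, hi⟩) (j := ⟨j, hj⟩) hij
  have hr : ∀ i j (hi : i < 2 * h) (hj : j < 2 * h), i + j + 1 = 2 * h →
      u ⟨i + 1, by omega⟩ = u ⟨j + 1, by omega⟩ := fun i j hi hj hij =>
    htail.apply_eq (i := ⟨i, hi⟩) (j := ⟨j, hj⟩) hij
  -- the two reflections compose to the shift by two; the second one maps odd positions to even ones
  have heven : ∀ j (hj : j ≤ h), u ⟨2 * j, by omega⟩ = u 0 := by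
    intro j
    induction j with
    | zero => intro _; rfl
    | succ j ih =>
      intro hj
      rw [← ih (by omega), hl (2 * j) (2 * h - 1 - 2 * j) (by omega) (by omega) (by omega)]
      convert (hr (2 * h - 2 - 2 * j) (2 * j + 1) (by omega) (by omega) (by omega)).symm using 3
        <;> omega
  refine ⟨u 0, fun ⟨i, hi⟩ => ?_⟩
  obtain ⟨j, rfl | rfl⟩ := Nat.even_or_odd' i
  · exact heven j (by omega)
  · rw [hr (2 * j) (2 * h - 1 - 2 * j) (by omega) (by omega) (by omega)]
    convert heven (h - j) (by omega) using 3
    omega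

theorem pow_le_card_symm [NeZero q] : q ^ ((n + 1) / 2) ≤ #{u : Fin n → ZMod q | Symm u} := by
  calc q ^ ((n + 1) / 2) = #(univ : Finset (Fin ((n + 1) / 2) → ZMod q)) := by simp
    _ ≤ _ := by
      refine card_le_card_of_injOn (fun w j => w ⟨min (j : ℕ) (n - 1 - j), by omega⟩) ?_ ?_
      · intro w _
        simp only [coe_filter, mem_univ, true_and]
        intro j
        show w _ = w _
        congr 2
        simp only [Fin.val_rev]
        omega
      · intro w _ w' _ hww'
        funext i
        have := congrFun hww' ⟨i, by omega⟩
        convert this using 3 <;> simp only [left_eq_inf] <;> omega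

end Tuples

section Windows

theorem window_succ_eq_snoc (s : ℤ → ZMod q) (k : ℕ) (i : ℤ) :
    window s (k + 1) i = Fin.snoc (window s k i) (s (i + k)) := by
  funext j
  cases j using Fin.lastCases <;> simp [window]

theorem window_succ_eq_cons (s : ℤ → ZMod q) (k : ℕ) (i : ℤ) :
    window s (k + 1) i = Fin.cons (s i) (window s k (i + 1)) := by
  funext j
  cases j using Fin.cases with
  | zero => simp [window]
  | succ j => simp [window, add_assoc, add_comm (1 : ℤ)]

variable {s : ℤ → ZMod q} {n m : ℕ}

theorem IsNWindowSeq.apply_add_eq_of_window_eq (hS : IsNWindowSeq s n m) {i j : ℤ}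
    (h : window s n i = window s n j) (c : ℤ) : s (i + c) = s (j + c) := by
  obtain ⟨t, ht⟩ := (hS.2 i j h).dvd
  rw [show j + c = i + c + t * m by linear_combination ht]
  exact ((Function.Periodic.int_mul hS.1.2.1 t) (i + c)).symm

theorem IsNWindowSeq.le_card_appearsIn [NeZero q] (hS : IsNWindowSeq s n m) :
    m ≤ #{u : Fin n → ZMod q | AppearsIn s n u} := by
  have hinj : Set.InjOn (fun i : ℕ => window s n i) (range m) := by
    intro i hi j hj hij
    exact Int.natCast_modEq_iff.mp (hS.2 i j hij) |>.eq_of_lt_of_lt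
      (mem_range.mp hi) (mem_range.mp hj)
  calc m = #((range m).image fun i : ℕ => window s n i) := by
        rw [card_image_of_injOn hinj, card_range]
    _ ≤ _ := card_le_card fun u hu => by
        obtain ⟨i, -, rfl⟩ := mem_image.mp hu
        exact mem_filter.mpr ⟨mem_univ _, i, rfl⟩

end Windows

def AppearsUpToRev (s : ℤ → ZMod q) (n : ℕ) (u : Fin n → ZMod q) : Prop :=
  AppearsIn s n u ∨ AppearsIn s n (tupRev u)

section Orientable

variable {s : ℤ → ZMod q} {n m : ℕ}

theorem appearsUpToRev_tupRev {u : Fin n → ZMod q} :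
    AppearsUpToRev s n (tupRev u) ↔ AppearsUpToRev s n u := by
  rw [AppearsUpToRev, AppearsUpToRev, tupRev_tupRev, or_comm]

theorem IsOS.not_appearsIn_tupRev (hS : IsOS s n m) {u : Fin n → ZMod q}
    (hu : AppearsIn s n u) : ¬ AppearsIn s n (tupRev u) := by
  rintro ⟨j, hj⟩
  obtain ⟨i, rfl⟩ := hu
  exact hS.2 i j (by rw [hj, tupRev_tupRev])

theorem IsOS.not_appearsUpToRev_of_symm (hS : IsOS s n m) {u : Fin n → ZMod q} (hu : Symm u) :
    ¬ AppearsUpToRev s n u := by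
  rw [AppearsUpToRev, symm_iff_tupRev_eq.mp hu, or_self]
  intro h
  exact hS.not_appearsIn_tupRev h (by rwa [symm_iff_tupRev_eq.mp hu])

theorem IsOS.card_appearsUpToRev [NeZero q] (hS : IsOS s n m) :
    #{u : Fin n → ZMod q | AppearsUpToRev s n u} =
      2 * #{u : Fin n → ZMod q | AppearsIn s n u} := by
  have hrev : #{u : Fin n → ZMod q | AppearsIn s n (tupRev u)} =
      #{u : Fin n → ZMod q | AppearsIn s n u} :=
    card_nbij' tupRev tupRev (fun u hu => by simpa using hu)
      (fun u hu => by simpa [tupRev_tupRev] using hu)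
      (fun u _ => tupRev_tupRev u) (fun u _ => tupRev_tupRev u)
  have hdisj : Disjoint (univ.filter fun u : Fin n → ZMod q => AppearsIn s n u)
      (univ.filter fun u => AppearsIn s n (tupRev u)) := by
    rw [disjoint_filter]
    exact fun u _ hu => hS.not_appearsIn_tupRev hu
  have hunion : (univ.filter fun u : Fin n → ZMod q => AppearsUpToRev s n u) =
      (univ.filter fun u => AppearsIn s n u) ∪
        (univ.filter fun u => AppearsIn s n (tupRev u)) := by
    ext u
    simp only [mem_union, mem_filter, mem_univ, true_and]
    rfl
  rw [hunion, card_union_of_disjoint hdisj, hrev, two_mul]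

theorem IsOS.two_mul_add_card_not_appearsUpToRev_le [NeZero q] (hS : IsOS s n m) :
    2 * m + #{u : Fin n → ZMod q | ¬ AppearsUpToRev s n u} ≤ q ^ n := by
  have hsplit := card_filter_add_card_filter_not (s := univ) (AppearsUpToRev s n)
  rw [card_univ, Fintype.card_fun, ZMod.card, Fintype.card_fin, hS.card_appearsUpToRev] at hsplit
  have := hS.1.le_card_appearsIn
  omega

end Orientable

section Fibre

variable {s : ℤ → ZMod q} {m k : ℕ}

theorem IsOS.exists_not_appearsUpToRev_snoc [NeZero q] (hq : Odd q) (hS : IsOS s (k + 1) m)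
    {v : Fin k → ZMod q} (hv : Symm v) : ∃ a, ¬ AppearsUpToRev s (k + 1) (Fin.snoc v a) := by
  set A := univ.filter fun a : ZMod q => AppearsIn s (k + 1) (Fin.snoc v a)
  set B := univ.filter fun b : ZMod q => AppearsIn s (k + 1) (tupRev (Fin.snoc v b))
  have hA : ∀ a, a ∈ A ↔ ∃ i, window s k i = v ∧ s (i + k) = a := by
    simp only [A, mem_filter, mem_univ, true_and, AppearsIn, window_succ_eq_snoc, Fin.snoc_inj,
      implies_true]
  have hB : ∀ b, b ∈ B ↔ ∃ j, s j = b ∧ window s k (j + 1) = v := by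
    simp only [B, mem_filter, mem_univ, true_and, AppearsIn, tupRev_snoc,
      symm_iff_tupRev_eq.mp hv, window_succ_eq_cons, Fin.cons_inj, implies_true]
  -- `a ∈ A` and `b ∈ B` correspond to each other when `b, v, a` occurs in `s`
  let r a b := ∃ i, window s k i = v ∧ s (i + k) = a ∧ s (i - 1) = b
  have hAB : #A ≤ #B := by
    refine card_le_card_of_forall_subsingleton r (fun a ha => ?_) ?_
    · obtain ⟨i, hi, rfl⟩ := (hA a).mp ha
      exact ⟨s (i - 1), (hB _).mpr ⟨i - 1, rfl, by rwa [sub_add_cancel]⟩, i, hi, rfl, rfl⟩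
    · rintro b - a ⟨-, i, hi, rfl, rfl⟩ a' ⟨-, i', hi', rfl, hii'⟩
      have hw : window s (k + 1) (i - 1) = window s (k + 1) (i' - 1) := by
        rw [window_succ_eq_cons, window_succ_eq_cons, sub_add_cancel, sub_add_cancel, hi, hi',
          hii']
      convert hS.1.apply_add_eq_of_window_eq hw (k + 1) using 2 <;> ring
  have hBA : #B ≤ #A := by
    refine card_le_card_of_forall_subsingleton' r (fun b hb => ?_) ?_
    · obtain ⟨j, rfl, hj⟩ := (hB b).mp hb
      exact ⟨s (j + 1 + k), (hA _).mpr ⟨j + 1, hj, rfl⟩, j + 1, hj, rfl,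
        by rw [add_sub_cancel_right]⟩
    · rintro a - b ⟨-, i, hi, rfl, rfl⟩ b' ⟨-, i', hi', hii', rfl⟩
      have hw : window s (k + 1) i = window s (k + 1) i' := by
        rw [window_succ_eq_snoc, window_succ_eq_snoc, hi, hi', hii']
      simpa only [sub_eq_add_neg] using hS.1.apply_add_eq_of_window_eq hw (-1)
  have hdisj : Disjoint A B := by
    rw [disjoint_filter]
    exact fun a _ ha => hS.not_appearsIn_tupRev ha
  by_contra! hall
  have hcover : A ∪ B = univ := eq_univ_of_forall fun a => mem_union.mpr <|
    (hall a).imp (fun h => mem_filter.mpr ⟨mem_univ a, h⟩)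
      (fun h => mem_filter.mpr ⟨mem_univ a, h⟩)
  have hcard := card_union_of_disjoint hdisj
  rw [hcover, card_univ, ZMod.card, ← le_antisymm hAB hBA] at hcard
  exact Nat.not_even_iff_odd.mpr hq ⟨_, hcard⟩

end Fibre

section Count

variable {s : ℤ → ZMod q} {m k h : ℕ}

theorem IsOS.pow_le_card_symm_init [NeZero q] (hq : Odd q) (hS : IsOS s (k + 1) m) :
    q ^ ((k + 1) / 2) ≤
      #{u : Fin (k + 1) → ZMod q | ¬ AppearsUpToRev s (k + 1) u ∧ Symm (Fin.init u)} := by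
  choose! a ha using fun v (hv : Symm v) => hS.exists_not_appearsUpToRev_snoc hq hv
  calc q ^ ((k + 1) / 2) ≤ #{v : Fin k → ZMod q | Symm v} := pow_le_card_symm
    _ ≤ _ := by
      refine card_le_card_of_injOn (fun v => Fin.snoc v (a v)) (fun v hv => ?_) fun v _ v' _ h => ?_
      · simp only [mem_coe, mem_filter, mem_univ, true_and] at hv ⊢
        exact ⟨ha v hv, by rwa [Fin.init_snoc]⟩
      · simpa only [Fin.init_snoc] using congrArg Fin.init h

theorem IsOS.pow_le_card_not_symm_symm_init_add [NeZero q] (hq : Odd q)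
    (hS : IsOS s (k + 1) m) :
    q ^ ((k + 1) / 2) ≤ #{u : Fin (k + 1) → ZMod q |
      ¬ AppearsUpToRev s (k + 1) u ∧ ¬ Symm u ∧ Symm (Fin.init u)} + q := by
  calc q ^ ((k + 1) / 2)
      ≤ #{u : Fin (k + 1) → ZMod q | ¬ AppearsUpToRev s (k + 1) u ∧ Symm (Fin.init u)} :=
        hS.pow_le_card_symm_init hq
    _ ≤ #((univ.filter fun u : Fin (k + 1) → ZMod q =>
          ¬ AppearsUpToRev s (k + 1) u ∧ ¬ Symm u ∧ Symm (Fin.init u)) ∪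
          univ.filter fun u => Uniform u) :=
        card_le_card fun u hu => by
          simp only [mem_union, mem_filter, mem_univ, true_and] at hu ⊢
          by_cases hu' : Symm u
          · exact Or.inr (uniform_of_symm_of_symm_init hu' hu.2)
          · exact Or.inl ⟨hu.1, hu', hu.2⟩
    _ ≤ _ := (card_union_le _ _).trans (Nat.add_le_add_left card_uniform_le _)

theorem IsOS.le_card_not_appearsUpToRev_add [NeZero q] (hq : Odd q)
    (hS : IsOS s (2 * h + 1) m) :
    q ^ (h + 1) + 2 * q ^ h ≤
      #{u : Fin (2 * h + 1) → ZMod q | ¬ AppearsUpToRev s (2 * h + 1) u} + 2 * q := by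
  set P := univ.filter fun u : Fin (2 * h + 1) → ZMod q => Symm u
  set L := univ.filter fun u : Fin (2 * h + 1) → ZMod q =>
    ¬ AppearsUpToRev s (2 * h + 1) u ∧ ¬ Symm u ∧ Symm (Fin.init u)
  set R := univ.filter fun u : Fin (2 * h + 1) → ZMod q =>
    ¬ AppearsUpToRev s (2 * h + 1) u ∧ ¬ Symm u ∧ Symm (Fin.tail u)
  have hP : q ^ (h + 1) ≤ #P := by
    simpa only [show (2 * h + 1 + 1) / 2 = h + 1 by omega]
      using pow_le_card_symm (q := q) (n := 2 * h + 1)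
  have hL : q ^ h ≤ #L + q := by
    simpa only [show (2 * h + 1) / 2 = h by omega]
      using hS.pow_le_card_not_symm_symm_init_add hq
  have hLR : #L ≤ #R := by
    refine card_le_card_of_injOn tupRev (fun u hu => ?_) tupRev_injective.injOn
    simp only [L, R, mem_coe, mem_filter, mem_univ, true_and] at hu ⊢
    rwa [appearsUpToRev_tupRev, symm_tupRev, tail_tupRev, symm_tupRev]
  have hdisj : Disjoint L R := by
    rw [disjoint_filter]
    rintro u - ⟨-, hu, hinit⟩ ⟨-, -, htail⟩
    exact hu (uniform_of_symm_init_of_symm_tail hinit htail).symm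
  have hsub : P ∪ (L ∪ R) ⊆ univ.filter fun u => ¬ AppearsUpToRev s (2 * h + 1) u := by
    intro u hu
    simp only [P, L, R, mem_union, mem_filter, mem_univ, true_and] at hu ⊢
    rcases hu with hu | hu | hu
    exacts [hS.not_appearsUpToRev_of_symm hu, hu.1, hu.1]
  have hdisj' : Disjoint P (L ∪ R) := by
    simp only [P, L, R, disjoint_union_right, disjoint_filter]
    exact ⟨fun u _ hu hu' => hu'.2.1 hu, fun u _ hu hu' => hu'.2.1 hu⟩
  have := card_le_card hsub
  rw [card_union_of_disjoint hdisj', card_union_of_disjoint hdisj] at this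
  omega

end Count

end OSeq

theorem period_le_of_orientable_odd_q_odd_n_general {q n m : ℕ} (hqodd : Odd q)
    (hnodd : Odd n) (s : ℤ → ZMod q) (hS : IsOS s n m) :
    2 * (m : ℤ) ≤ (q : ℤ) ^ n - (q : ℤ) ^ ((n + 1) / 2) - 2 * (q : ℤ) ^ ((n - 1) / 2)
      + q + (q : ℤ) ^ 2 := by
  have : NeZero q := ⟨hqodd.pos.ne'⟩
  obtain ⟨h, rfl⟩ := hnodd
  have hupper := hS.two_mul_add_card_not_appearsUpToRev_le
  have hlower := hS.le_card_not_appearsUpToRev_add hqodd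
  rw [show (2 * h + 1 + 1) / 2 = h + 1 by omega, show (2 * h + 1 - 1) / 2 = h by omega]
  have hq2 : (q : ℤ) ≤ (q : ℤ) ^ 2 := by nlinarith [hqodd.pos]
  zify at hupper hlower
  linarith

/-- For odd `q ≥ 3` and odd `n ≥ 7`, the period of any orientable sequence of
order `n` over `ℤ_q` is at most `(q^n - q^{(n+1)/2} - 2q^{(n-1)/2} + q + q^2)/2`. -/
theorem period_le_of_orientable_odd_q_odd_n {q n m : ℕ} (hq : 3 ≤ q) (hqodd : Odd q)
    (hn : 7 ≤ n) (hnodd : Odd n) (s : ℤ → ZMod q) (hS : IsOS s n m) :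
    2 * (m : ℤ) ≤ (q : ℤ) ^ n - (q : ℤ) ^ ((n + 1) / 2) - 2 * (q : ℤ) ^ ((n - 1) / 2)
      + q + (q : ℤ) ^ 2 :=
  period_le_of_orientable_odd_q_odd_n_general hqodd hnodd s hS
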